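/- arXiv:1805.03892 — 2 statements merged into one kernel-verified Lean document; each statement's English description precedes it below -/
import Mathlib

section
/- For every λ > 0 and every q with 0 ≤ q < 1, setting v = q/(1−q), one has (λ²/(1+λ)) · (1/(1−q)²) · (1 + (λ/2)v²) · e^{−λv} = Σ_{(i,j) ∈ ℕ×ℕ} ((−1)^i/i!) · C(i+j+1, j) · (λ^{i+2}/(1+λ)) · q^{i+j} + Σ_{(i,k) ∈ ℕ×ℕ} ((−1)^i/i!) · C(i+k+3, k) · (λ^{i+3}/(2(1+λ))) · q^{i+k+2}, where both double series converge absolutely and C(n, m) denotes the binomial coefficient. -/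
open Real

private lemma expHS' (a x : ℝ) :
    HasSum (fun i : ℕ => a * (x ^ i / (Nat.factorial i))) (a * Real.exp x) := by
  have h : HasSum (fun i : ℕ => x ^ i / (Nat.factorial i)) (Real.exp x) := by
    rw [Real.exp_eq_exp_ℝ]
    exact NormedSpace.expSeries_div_hasSum_exp x
  exact h.mul_left a

private lemma geomHS {q : ℝ} (hq0 : 0 ≤ q) (hq1 : q < 1) (t : ℕ) (c : ℝ) :
    HasSum (fun j : ℕ => c * ((Nat.choose (j + t) t : ℝ) * q ^ j))
      (c * (1 / (1 - q) ^ (t + 1))) := by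
  have hr : ‖q‖ < 1 := by rw [Real.norm_eq_abs, abs_of_nonneg hq0]; exact hq1
  exact (hasSum_choose_mul_geometric_of_norm_lt_one t hr).mul_left c

private lemma inner1 {q : ℝ} (hq0 : 0 ≤ q) (hq1 : q < 1) (c d : ℝ) (i : ℕ) :
    HasSum (fun j : ℕ => c * (Nat.choose (i + j + 1) j : ℝ) * d * q ^ (i + j))
      (c * d * q ^ i * (1 / (1 - q) ^ (i + 2))) := by
  have h := geomHS hq0 hq1 (i + 1) (c * d * q ^ i)
  have he : (fun j : ℕ => c * (Nat.choose (i + j + 1) j : ℝ) * d * q ^ (i + j))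
      = fun j : ℕ => (c * d * q ^ i) * ((Nat.choose (j + (i + 1)) (i + 1) : ℝ) * q ^ j) := by
    funext j
    have hcs : Nat.choose (i + j + 1) j = Nat.choose (j + (i + 1)) (i + 1) := by
      rw [show j + (i + 1) = i + j + 1 from by omega,
          show i + 1 = (i + j + 1) - j from by omega]
      exact (Nat.choose_symm (by omega)).symm
    rw [hcs]; ring
  rw [he]; exact h

private lemma inner2 {q : ℝ} (hq0 : 0 ≤ q) (hq1 : q < 1) (c d : ℝ) (i : ℕ) :
    HasSum (fun k : ℕ => c * (Nat.choose (i + k + 3) k : ℝ) * d * q ^ (i + k + 2))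
      (c * d * q ^ (i + 2) * (1 / (1 - q) ^ (i + 4))) := by
  have h := geomHS hq0 hq1 (i + 3) (c * d * q ^ (i + 2))
  have he : (fun k : ℕ => c * (Nat.choose (i + k + 3) k : ℝ) * d * q ^ (i + k + 2))
      = fun k : ℕ => (c * d * q ^ (i + 2)) * ((Nat.choose (k + (i + 3)) (i + 3) : ℝ) * q ^ k) := by
    funext k
    have hcs : Nat.choose (i + k + 3) k = Nat.choose (k + (i + 3)) (i + 3) := by
      rw [show k + (i + 3) = i + k + 3 from by omega,
          show i + 3 = (i + k + 3) - k from by omega]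
      exact (Nat.choose_symm (by omega)).symm
    rw [hcs]; ring
  rw [he]; exact h

private lemma outer1 (lam q ε : ℝ) (h1q : (1 : ℝ) - q ≠ 0) (hl : (1 : ℝ) + lam ≠ 0) :
    HasSum (fun i : ℕ => (ε ^ i / (Nat.factorial i)) * (lam ^ (i + 2) / (1 + lam)) * q ^ i *
        (1 / (1 - q) ^ (i + 2)))
      ((lam ^ 2 / ((1 + lam) * (1 - q) ^ 2)) * Real.exp (ε * lam * (q / (1 - q)))) := by
  have h := expHS' (lam ^ 2 / ((1 + lam) * (1 - q) ^ 2)) (ε * lam * (q / (1 - q)))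
  have he : (fun i : ℕ => (ε ^ i / (Nat.factorial i)) * (lam ^ (i + 2) / (1 + lam)) * q ^ i *
        (1 / (1 - q) ^ (i + 2)))
      = fun i : ℕ => (lam ^ 2 / ((1 + lam) * (1 - q) ^ 2)) *
          ((ε * lam * (q / (1 - q))) ^ i / (Nat.factorial i)) := by
    funext i
    have hfac : (Nat.factorial i : ℝ) ≠ 0 := by exact_mod_cast i.factorial_ne_zero
    have hx : (ε * lam * (q / (1 - q))) ^ i = (ε ^ i * lam ^ i * q ^ i) / (1 - q) ^ i := by
      rw [show ε * lam * (q / (1 - q)) = (ε * lam * q) / (1 - q) from by ring,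
        div_pow, mul_pow, mul_pow]
    rw [hx]
    field_simp
    ring
  rw [he]; exact h

private lemma outer2 (lam q ε : ℝ) (h1q : (1 : ℝ) - q ≠ 0) (hl : (1 : ℝ) + lam ≠ 0) :
    HasSum (fun i : ℕ => (ε ^ i / (Nat.factorial i)) * (lam ^ (i + 3) / (2 * (1 + lam))) *
        q ^ (i + 2) * (1 / (1 - q) ^ (i + 4)))
      ((lam ^ 3 * q ^ 2 / (2 * (1 + lam) * (1 - q) ^ 4)) *
        Real.exp (ε * lam * (q / (1 - q)))) := by
  have h := expHS' (lam ^ 3 * q ^ 2 / (2 * (1 + lam) * (1 - q) ^ 4)) (ε * lam * (q / (1 - q)))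
  have he : (fun i : ℕ => (ε ^ i / (Nat.factorial i)) * (lam ^ (i + 3) / (2 * (1 + lam))) *
        q ^ (i + 2) * (1 / (1 - q) ^ (i + 4)))
      = fun i : ℕ => (lam ^ 3 * q ^ 2 / (2 * (1 + lam) * (1 - q) ^ 4)) *
          ((ε * lam * (q / (1 - q))) ^ i / (Nat.factorial i)) := by
    funext i
    have hfac : (Nat.factorial i : ℝ) ≠ 0 := by exact_mod_cast i.factorial_ne_zero
    have hx : (ε * lam * (q / (1 - q))) ^ i = (ε ^ i * lam ^ i * q ^ i) / (1 - q) ^ i := by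
      rw [show ε * lam * (q / (1 - q)) = (ε * lam * q) / (1 - q) from by ring,
        div_pow, mul_pow, mul_pow]
    rw [hx]
    field_simp
    ring
  rw [he]; exact h

theorem odds_xgamma_mixture_representation (lam : ℝ) (hlam : 0 < lam)
    (q : ℝ) (hq0 : 0 ≤ q) (hq1 : q < 1) :
    Summable (fun p : ℕ × ℕ =>
      ((-1 : ℝ) ^ p.1 / (Nat.factorial p.1)) * (Nat.choose (p.1 + p.2 + 1) p.2) *
        (lam ^ (p.1 + 2) / (1 + lam)) * q ^ (p.1 + p.2)) ∧
    Summable (fun p : ℕ × ℕ =>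
      ((-1 : ℝ) ^ p.1 / (Nat.factorial p.1)) * (Nat.choose (p.1 + p.2 + 3) p.2) *
        (lam ^ (p.1 + 3) / (2 * (1 + lam))) * q ^ (p.1 + p.2 + 2)) ∧
    (lam ^ 2 / (1 + lam)) * (1 / (1 - q) ^ 2) * (1 + (lam / 2) * (q / (1 - q)) ^ 2) *
        Real.exp (-lam * (q / (1 - q)))
      = (∑' p : ℕ × ℕ,
          ((-1 : ℝ) ^ p.1 / (Nat.factorial p.1)) * (Nat.choose (p.1 + p.2 + 1) p.2) *
            (lam ^ (p.1 + 2) / (1 + lam)) * q ^ (p.1 + p.2)) +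
        (∑' p : ℕ × ℕ,
          ((-1 : ℝ) ^ p.1 / (Nat.factorial p.1)) * (Nat.choose (p.1 + p.2 + 3) p.2) *
            (lam ^ (p.1 + 3) / (2 * (1 + lam))) * q ^ (p.1 + p.2 + 2)) := by
  have h1q : (0 : ℝ) < 1 - q := by linarith
  have h1q' : (1 : ℝ) - q ≠ 0 := ne_of_gt h1q
  have hl : (0 : ℝ) < 1 + lam := by linarith
  have hl' : (1 : ℝ) + lam ≠ 0 := ne_of_gt hl
  -- absolute-value versions
  have hG1 : Summable (fun p : ℕ × ℕ =>
      ((1 : ℝ) ^ p.1 / (Nat.factorial p.1)) * (Nat.choose (p.1 + p.2 + 1) p.2) *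
        (lam ^ (p.1 + 2) / (1 + lam)) * q ^ (p.1 + p.2)) := by
    rw [summable_prod_of_nonneg (fun p => by positivity)]
    refine ⟨fun i => (inner1 hq0 hq1 ((1 : ℝ) ^ i / (Nat.factorial i))
      (lam ^ (i + 2) / (1 + lam)) i).summable, ?_⟩
    have he : (fun i : ℕ => ∑' j : ℕ,
        ((1 : ℝ) ^ i / (Nat.factorial i)) * (Nat.choose (i + j + 1) j) *
          (lam ^ (i + 2) / (1 + lam)) * q ^ (i + j))
        = fun i : ℕ => ((1 : ℝ) ^ i / (Nat.factorial i)) * (lam ^ (i + 2) / (1 + lam)) *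
            q ^ i * (1 / (1 - q) ^ (i + 2)) :=
      funext fun i => (inner1 hq0 hq1 _ _ i).tsum_eq
    rw [he]
    exact (outer1 lam q 1 h1q' hl').summable
  have hG2 : Summable (fun p : ℕ × ℕ =>
      ((1 : ℝ) ^ p.1 / (Nat.factorial p.1)) * (Nat.choose (p.1 + p.2 + 3) p.2) *
        (lam ^ (p.1 + 3) / (2 * (1 + lam))) * q ^ (p.1 + p.2 + 2)) := by
    rw [summable_prod_of_nonneg (fun p => by positivity)]
    refine ⟨fun i => (inner2 hq0 hq1 ((1 : ℝ) ^ i / (Nat.factorial i))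
      (lam ^ (i + 3) / (2 * (1 + lam))) i).summable, ?_⟩
    have he : (fun i : ℕ => ∑' k : ℕ,
        ((1 : ℝ) ^ i / (Nat.factorial i)) * (Nat.choose (i + k + 3) k) *
          (lam ^ (i + 3) / (2 * (1 + lam))) * q ^ (i + k + 2))
        = fun i : ℕ => ((1 : ℝ) ^ i / (Nat.factorial i)) * (lam ^ (i + 3) / (2 * (1 + lam))) *
            q ^ (i + 2) * (1 / (1 - q) ^ (i + 4)) :=
      funext fun i => (inner2 hq0 hq1 _ _ i).tsum_eq
    rw [he]
    exact (outer2 lam q 1 h1q' hl').summable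
  have habs1 : ∀ p : ℕ × ℕ,
      |((-1 : ℝ) ^ p.1 / (Nat.factorial p.1)) * (Nat.choose (p.1 + p.2 + 1) p.2) *
        (lam ^ (p.1 + 2) / (1 + lam)) * q ^ (p.1 + p.2)|
      = ((1 : ℝ) ^ p.1 / (Nat.factorial p.1)) * (Nat.choose (p.1 + p.2 + 1) p.2) *
        (lam ^ (p.1 + 2) / (1 + lam)) * q ^ (p.1 + p.2) := by
    intro p
    simp [abs_mul, abs_div, abs_pow, Nat.abs_cast, abs_of_nonneg hq0,
      abs_of_nonneg hlam.le, abs_of_nonneg hl.le]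
  have habs2 : ∀ p : ℕ × ℕ,
      |((-1 : ℝ) ^ p.1 / (Nat.factorial p.1)) * (Nat.choose (p.1 + p.2 + 3) p.2) *
        (lam ^ (p.1 + 3) / (2 * (1 + lam))) * q ^ (p.1 + p.2 + 2)|
      = ((1 : ℝ) ^ p.1 / (Nat.factorial p.1)) * (Nat.choose (p.1 + p.2 + 3) p.2) *
        (lam ^ (p.1 + 3) / (2 * (1 + lam))) * q ^ (p.1 + p.2 + 2) := by
    intro p
    have h2 : (0:ℝ) ≤ 2 * (1 + lam) := by linarith
    simp [abs_mul, abs_div, abs_pow, Nat.abs_cast, abs_of_nonneg hq0,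
      abs_of_nonneg hlam.le, abs_of_nonneg h2]
  have key1 : Summable (fun p : ℕ × ℕ =>
      ((-1 : ℝ) ^ p.1 / (Nat.factorial p.1)) * (Nat.choose (p.1 + p.2 + 1) p.2) *
        (lam ^ (p.1 + 2) / (1 + lam)) * q ^ (p.1 + p.2)) :=
    summable_abs_iff.mp (hG1.congr fun p => (habs1 p).symm)
  have key2 : Summable (fun p : ℕ × ℕ =>
      ((-1 : ℝ) ^ p.1 / (Nat.factorial p.1)) * (Nat.choose (p.1 + p.2 + 3) p.2) *
        (lam ^ (p.1 + 3) / (2 * (1 + lam))) * q ^ (p.1 + p.2 + 2)) :=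
    summable_abs_iff.mp (hG2.congr fun p => (habs2 p).symm)
  refine ⟨key1, key2, ?_⟩
  have ht1 : (∑' p : ℕ × ℕ,
      ((-1 : ℝ) ^ p.1 / (Nat.factorial p.1)) * (Nat.choose (p.1 + p.2 + 1) p.2) *
        (lam ^ (p.1 + 2) / (1 + lam)) * q ^ (p.1 + p.2))
      = (lam ^ 2 / ((1 + lam) * (1 - q) ^ 2)) * Real.exp (-lam * (q / (1 - q))) := by
    rw [Summable.tsum_prod' key1 (fun i => (inner1 hq0 hq1 ((-1 : ℝ) ^ i / (Nat.factorial i))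
      (lam ^ (i + 2) / (1 + lam)) i).summable)]
    have h := outer1 lam q (-1) h1q' hl'
    rw [show (-1 : ℝ) * lam * (q / (1 - q)) = -lam * (q / (1 - q)) from by ring] at h
    refine Eq.trans (tsum_congr fun i => ?_) h.tsum_eq
    exact (inner1 hq0 hq1 ((-1 : ℝ) ^ i / (Nat.factorial i))
      (lam ^ (i + 2) / (1 + lam)) i).tsum_eq
  have ht2 : (∑' p : ℕ × ℕ,
      ((-1 : ℝ) ^ p.1 / (Nat.factorial p.1)) * (Nat.choose (p.1 + p.2 + 3) p.2) *
        (lam ^ (p.1 + 3) / (2 * (1 + lam))) * q ^ (p.1 + p.2 + 2))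
      = (lam ^ 3 * q ^ 2 / (2 * (1 + lam) * (1 - q) ^ 4)) *
          Real.exp (-lam * (q / (1 - q))) := by
    rw [Summable.tsum_prod' key2 (fun i => (inner2 hq0 hq1 ((-1 : ℝ) ^ i / (Nat.factorial i))
      (lam ^ (i + 3) / (2 * (1 + lam))) i).summable)]
    have h := outer2 lam q (-1) h1q' hl'
    rw [show (-1 : ℝ) * lam * (q / (1 - q)) = -lam * (q / (1 - q)) from by ring] at h
    refine Eq.trans (tsum_congr fun i => ?_) h.tsum_eq
    exact (inner2 hq0 hq1 ((-1 : ℝ) ^ i / (Nat.factorial i))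
      (lam ^ (i + 3) / (2 * (1 + lam))) i).tsum_eq
  rw [ht1, ht2]
  field_simp
end

section
/- Let λ > 0 and let G : ℝ → ℝ and g : ℝ → ℝ satisfy: G has derivative g(x) at every x > 0, g(x) ≥ 0 and G(x) < 1 for all x > 0, G is continuous at 0 with G(0) = 0, and G(x) → 1 as x → ∞. Then ∫_{x ∈ (0,∞)} (λ²/(1+λ)) · (g(x)/(1−G(x))²) · (1 + (λ/2)·(G(x)/(1−G(x)))²) · e^{−λ·G(x)/(1−G(x))} dx = 1. -/
open MeasureTheory Real Filter

private lemma hD_aux (lam v : ℝ) :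
    HasDerivAt (fun v => 1 - (1 + lam + lam * v + lam ^ 2 * v ^ 2 / 2) *
        Real.exp (-lam * v) / (1 + lam))
      (-(((lam + lam ^ 2 * v) * Real.exp (-lam * v) +
        (1 + lam + lam * v + lam ^ 2 * v ^ 2 / 2) * (-lam * Real.exp (-lam * v))) / (1 + lam)))
      v := by
  have hE : HasDerivAt (fun v : ℝ => Real.exp (-lam * v)) (-lam * Real.exp (-lam * v)) v := by
    have h1 : HasDerivAt (fun v : ℝ => -lam * v) (-lam) v := by
      simpa using (hasDerivAt_id v).const_mul (-lam)
    have := (Real.hasDerivAt_exp (-lam * v)).comp v h1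
    exact this.congr_deriv (by ring)
  have hP : HasDerivAt (fun v : ℝ => 1 + lam + lam * v + lam ^ 2 * v ^ 2 / 2)
      (lam + lam ^ 2 * v) v := by
    have h1 : HasDerivAt (fun v : ℝ => lam * v) lam v := by
      simpa using (hasDerivAt_id v).const_mul lam
    have h2 : HasDerivAt (fun v : ℝ => lam ^ 2 * v ^ 2 / 2) (lam ^ 2 * v) v := by
      have := ((hasDerivAt_pow 2 v).const_mul (lam ^ 2)).div_const 2
      exact this.congr_deriv (by norm_num; ring)
    have := ((hasDerivAt_const v (1 + lam)).add h1).add h2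
    exact this.congr_deriv (by ring)
  have := ((hP.mul hE).div_const (1 + lam)).const_sub 1
  simpa using this

theorem odds_xgamma_G_density_integrates_to_one (lam : ℝ) (hlam : 0 < lam)
    (G g : ℝ → ℝ)
    (hderiv : ∀ x > 0, HasDerivAt G (g x) x)
    (hg : ∀ x > 0, 0 ≤ g x)
    (hG1 : ∀ x > 0, G x < 1)
    (hcont : ContinuousAt G 0) (hG0 : G 0 = 0)
    (hlim : Filter.Tendsto G Filter.atTop (nhds 1)) :
    ∫ x in Set.Ioi (0 : ℝ),
        (lam ^ 2 / (1 + lam)) * (g x / (1 - G x) ^ 2) *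
          (1 + (lam / 2) * (G x / (1 - G x)) ^ 2) *
          Real.exp (-lam * (G x / (1 - G x))) = 1 := by
  have hlam1 : (1 : ℝ) + lam ≠ 0 := by positivity
  set V : ℝ → ℝ := fun x => G x / (1 - G x) with hV
  set h : ℝ → ℝ := fun v => 1 - (1 + lam + lam * v + lam ^ 2 * v ^ 2 / 2) *
      Real.exp (-lam * v) / (1 + lam) with hh
  set F : ℝ → ℝ := fun x => h (V x) with hF
  -- continuity at 0
  have hVc : ContinuousAt V 0 := by
    apply ContinuousAt.div hcont (continuousAt_const.sub hcont)
    simp [hG0]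
  have hhc : Continuous h := by
    apply Continuous.sub continuous_const
    apply Continuous.div_const
    apply Continuous.mul (by continuity)
    exact Real.continuous_exp.comp (by continuity)
  have hFc : ContinuousWithinAt F (Set.Ici 0) 0 :=
    ((hhc.continuousAt).comp hVc).continuousWithinAt
  -- F 0 = 0
  have hF0 : F 0 = 0 := by
    simp only [hF, hV, hh, hG0]
    field_simp
    norm_num
  -- derivative on Ioi 0
  have hFd : ∀ x ∈ Set.Ioi (0 : ℝ), HasDerivAt F
      ((lam ^ 2 / (1 + lam)) * (g x / (1 - G x) ^ 2) *
          (1 + (lam / 2) * (G x / (1 - G x)) ^ 2) *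
          Real.exp (-lam * (G x / (1 - G x)))) x := by
    intro x hx
    have hx0 : 0 < x := hx
    have hne : 1 - G x ≠ 0 := by
      have := hG1 x hx0; linarith
    have hVd : HasDerivAt V (g x / (1 - G x) ^ 2) x := by
      have hGd := hderiv x hx0
      have hden : HasDerivAt (fun y => 1 - G y) (-g x) x := hGd.const_sub 1
      have := hGd.div hden hne
      exact this.congr_deriv (by field_simp; ring)
    have := (hD_aux lam (V x)).comp x hVd
    refine this.congr_deriv ?_
    simp only [hV]
    field_simp
    ring
  -- nonnegativity
  have hFpos : ∀ x ∈ Set.Ioi (0 : ℝ), 0 ≤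
      (lam ^ 2 / (1 + lam)) * (g x / (1 - G x) ^ 2) *
          (1 + (lam / 2) * (G x / (1 - G x)) ^ 2) *
          Real.exp (-lam * (G x / (1 - G x))) := by
    intro x hx
    have h1 : 0 ≤ lam ^ 2 / (1 + lam) := by positivity
    have h2 : 0 ≤ g x / (1 - G x) ^ 2 := div_nonneg (hg x hx) (by positivity)
    have h3 : 0 ≤ 1 + (lam / 2) * (G x / (1 - G x)) ^ 2 := by positivity
    positivity
  -- limit at infinity
  have hFlim : Tendsto F atTop (nhds 1) := by
    have hVlim : Tendsto V atTop atTop := by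
      have hden : Tendsto (fun x => 1 - G x) atTop (nhds 0) := by
        have : Tendsto (fun x => (1:ℝ) - G x) atTop (nhds (1 - 1)) :=
          tendsto_const_nhds.sub hlim
        simpa using this
      have hden' : Tendsto (fun x => 1 - G x) atTop (nhdsWithin 0 (Set.Ioi 0)) := by
        refine tendsto_nhdsWithin_iff.2 ⟨hden, ?_⟩
        filter_upwards [eventually_gt_atTop (0 : ℝ)] with x hx
        have := hG1 x hx
        simpa using by linarith
      have hinv : Tendsto (fun x => (1 - G x)⁻¹) atTop atTop :=
        tendsto_inv_nhdsGT_zero.comp hden'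
      have := hlim.pos_mul_atTop one_pos hinv
      simpa [hV, div_eq_mul_inv] using this
    have hpoly : Tendsto (fun v : ℝ => (1 + lam + lam * v + lam ^ 2 * v ^ 2 / 2) *
        Real.exp (-lam * v)) atTop (nhds 0) := by
      have hkey : ∀ n : ℕ, Tendsto (fun v : ℝ => v ^ n * Real.exp (-lam * v)) atTop (nhds 0) := by
        intro n
        have hl : Tendsto (fun v : ℝ => lam * v) atTop atTop :=
          Tendsto.const_mul_atTop hlam tendsto_id
        have := (tendsto_pow_mul_exp_neg_atTop_nhds_zero n).comp hl
        have h2 : Tendsto (fun v : ℝ => (lam * v) ^ n * Real.exp (-(lam * v))) atTop (nhds 0) :=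
          this
        have h3 := h2.div_const (lam ^ n)
        convert h3 using 2 with v
        · field_simp [mul_pow]
          ring_nf
        · simp
      have e0 := hkey 0
      have e1 := hkey 1
      have e2 := hkey 2
      have : Tendsto (fun v : ℝ => (1 + lam) * (v ^ 0 * Real.exp (-lam * v)) +
          lam * (v ^ 1 * Real.exp (-lam * v)) +
          lam ^ 2 / 2 * (v ^ 2 * Real.exp (-lam * v))) atTop (nhds 0) := by
        have := ((e0.const_mul (1 + lam)).add (e1.const_mul lam)).add
          (e2.const_mul (lam ^ 2 / 2))
        simpa using this
      convert this using 2 with v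
      ring
    have hhlim : Tendsto h atTop (nhds 1) := by
      have := (hpoly.div_const (1 + lam)).const_sub 1
      simpa [hh] using this
    exact hhlim.comp hVlim
  have := integral_Ioi_of_hasDerivAt_of_nonneg hFc hFd hFpos hFlim
  rw [this, hF0, sub_zero]
end
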